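/- If force M halts under neutral context Π (i.e. force M reduces in finitely many steps to a normal form), then M halts under Π. -/
import Mathlib


namespace PQA

/-- Modes of Proto-Quipper-A: unrestricted, linear functional, linear circuit. -/
inductive Mode | U | L | Q
deriving DecidableEq, Repr

/-- The mode preorder generated by U > L, L > Q, Q > L. -/
def Mode.ge : Mode → Mode → Prop
  | .U, _ => True
  | .L, .U => False
  | .L, _ => True
  | .Q, .U => False
  | .Q, _ => True

/-- Types, stratified by mode. -/
inductive Ty
  | unitT (m : Mode)
  | qubit
  | tensor (m : Mode) (A B : Ty)
  | arrow (m : Mode) (A B : Ty)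
  | up (lo hi : Mode) (A : Ty)
  | down (A : Ty)
deriving DecidableEq, Repr

/-- The mode at which a type lives. -/
def Ty.mode : Ty → Mode
  | .unitT m => m
  | .qubit => .Q
  | .tensor m _ _ => m
  | .arrow m _ _ => m
  | .up _ hi _ => hi
  | .down _ => .L

/-- Simple (wire) types at the circuit mode Q. -/
inductive Ty.Simple : Ty → Prop
  | unit : Ty.Simple (.unitT .Q)
  | qubit : Ty.Simple .qubit
  | tensor {A B : Ty} : Ty.Simple A → Ty.Simple B → Ty.Simple (.tensor .Q A B)

mutual
/-- Terms (functional and circuit, distinguished by mode annotations). -/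
inductive Tm
  | var (x : String)
  | lam (m : Mode) (x : String) (M : Tm)
  | triv (m : Mode)
  | pair (m : Mode) (M N : Tm)
  | app (m : Mode) (M N : Tm)
  | susp (M : Tm)
  | force (M : Tm)
  | down (M : Tm)
  | gate (g : String) (S U : Ty)
  | matchWith (M : Tm) (p : Pat)
/-- Match patterns together with their bodies. -/
inductive Pat
  | punit (N : Tm)
  | ppair (x y : String) (N : Tm)
  | pdown (x : String) (N : Tm)
end

mutual
/-- Capture-naive simultaneous substitution. -/
def Tm.subst (σ : String → Tm) : Tm → Tm
  | .var x => σ x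
  | .lam m x M => .lam m x (M.subst (fun y => if y = x then .var y else σ y))
  | .triv m => .triv m
  | .pair m M N => .pair m (M.subst σ) (N.subst σ)
  | .app m M N => .app m (M.subst σ) (N.subst σ)
  | .susp M => .susp (M.subst σ)
  | .force M => .force (M.subst σ)
  | .down M => .down (M.subst σ)
  | .gate g S U => .gate g S U
  | .matchWith M p => .matchWith (M.subst σ) (p.subst σ)

def Pat.subst (σ : String → Tm) : Pat → Pat
  | .punit N => .punit (N.subst σ)
  | .ppair x y N =>
      .ppair x y (N.subst (fun z => if z = x ∨ z = y then .var z else σ z))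
  | .pdown x N => .pdown x (N.subst (fun z => if z = x then .var z else σ z))
end

/-- Substitution of a single term for a variable. -/
def subst1 (x : String) (V M : Tm) : Tm :=
  M.subst (fun y => if y = x then V else .var y)

/-- Variables bound by a pattern. -/
def Pat.vars : Pat → List String
  | .punit _ => []
  | .ppair x y _ => [x, y]
  | .pdown x _ => [x]

/-- The body of a pattern. -/
def Pat.body : Pat → Tm
  | .punit N => N
  | .ppair _ _ N => N
  | .pdown _ N => N

/-- Apply a function to the body of a pattern (for commuting conversions). -/
def Pat.mapBody (f : Tm → Tm) : Pat → Pat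
  | .punit N => .punit (f N)
  | .ppair x y N => .ppair x y (f N)
  | .pdown x N => .pdown x (f N)

/-- Replace the body of a pattern. -/
def Pat.withBody (p : Pat) (B : Tm) : Pat := p.mapBody (fun _ => B)

/-- The context of typed variables bound by a pattern eliminating type `A`. -/
def patCtx : Pat → Ty → List (String × Ty)
  | .punit _, _ => []
  | .ppair x y _, .tensor _ A B => [(x, A), (y, B)]
  | .ppair x y _, _ => [(x, .qubit), (y, .qubit)]
  | .pdown x _, .down A => [(x, A)]
  | .pdown x _, _ => []

/-- Typing contexts. -/
abbrev Ctx := List (String × Ty)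

/-- Every assumption in the context is at a mode ≥ m. -/
def CtxGe (Δ : Ctx) (m : Mode) : Prop := ∀ q ∈ Δ, Mode.ge q.2.mode m

/-- The context is entirely unrestricted. -/
def CtxU (Δ : Ctx) : Prop := CtxGe Δ .U

/-- Context splitting: linear assumptions go to one side, unrestricted
assumptions may be shared. -/
inductive Split : Ctx → Ctx → Ctx → Prop
  | nil : Split [] [] []
  | left {Δ Δ₁ Δ₂ : Ctx} {q : String × Ty} :
      Split Δ Δ₁ Δ₂ → Split (q :: Δ) (q :: Δ₁) Δ₂
  | right {Δ Δ₁ Δ₂ : Ctx} {q : String × Ty} :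
      Split Δ Δ₁ Δ₂ → Split (q :: Δ) Δ₁ (q :: Δ₂)
  | both {Δ Δ₁ Δ₂ : Ctx} {q : String × Ty} :
      q.2.mode = .U → Split Δ Δ₁ Δ₂ → Split (q :: Δ) (q :: Δ₁) (q :: Δ₂)

mutual
/-- The substructural Proto-Quipper-A typing judgment `Δ ⊢ P : A`. -/
inductive HasTy : Ctx → Tm → Ty → Prop
  | var {Δ₁ Δ₂ : Ctx} {x : String} {A : Ty} :
      CtxU Δ₁ → CtxU Δ₂ → (A.mode = .Q → A.Simple) →
      HasTy (Δ₁ ++ (x, A) :: Δ₂) (.var x) A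
  | lam {Δ : Ctx} {m : Mode} {x : String} {M : Tm} {A B : Ty} :
      A.mode = m → B.mode = m → (m = .Q → A.Simple ∧ B.Simple) →
      HasTy ((x, A) :: Δ) M B →
      HasTy Δ (.lam m x M) (.arrow m A B)
  | triv {Δ : Ctx} {m : Mode} : CtxU Δ → HasTy Δ (.triv m) (.unitT m)
  | pair {Δ Δ₁ Δ₂ : Ctx} {m : Mode} {M N : Tm} {A B : Ty} :
      Split Δ Δ₁ Δ₂ → A.mode = m → B.mode = m →
      HasTy Δ₁ M A → HasTy Δ₂ N B →
      HasTy Δ (.pair m M N) (.tensor m A B)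
  | app {Δ Δ₁ Δ₂ : Ctx} {m : Mode} {M N : Tm} {A B : Ty} :
      Split Δ Δ₁ Δ₂ →
      HasTy Δ₁ M (.arrow m A B) → HasTy Δ₂ N A →
      HasTy Δ (.app m M N) B
  | susp {Δ : Ctx} {lo hi : Mode} {M : Tm} {A : Ty} :
      ((lo = .L ∧ hi = .U) ∨ (lo = .Q ∧ hi = .L)) →
      A.mode = lo → CtxGe Δ hi →
      HasTy Δ M A →
      HasTy Δ (.susp M) (.up lo hi A)
  | force {Δ : Ctx} {lo hi : Mode} {M : Tm} {A : Ty} :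
      HasTy Δ M (.up lo hi A) → HasTy Δ (.force M) A
  | down {Δ : Ctx} {M : Tm} {A : Ty} :
      A.mode = .U → HasTy Δ M A → HasTy Δ (.down M) (.down A)
  | gate {Δ : Ctx} {g : String} {S U : Ty} :
      CtxU Δ → S.Simple → U.Simple →
      HasTy Δ (.gate g S U) (.arrow .Q S U)
  | mtch {Δ Δ₁ Δ₂ : Ctx} {M : Tm} {p : Pat} {A B : Ty} :
      Split Δ Δ₁ Δ₂ →
      HasTy Δ₁ M A → PatTy Δ₂ p A B →
      HasTy Δ (.matchWith M p) B

/-- Pattern typing `Δ ⊢ p : A ⇒ B` for the substructural system. -/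
inductive PatTy : Ctx → Pat → Ty → Ty → Prop
  | punit {Δ : Ctx} {m : Mode} {N : Tm} {B : Ty} :
      Mode.ge m B.mode → HasTy Δ N B →
      PatTy Δ (.punit N) (.unitT m) B
  | ppair {Δ : Ctx} {m : Mode} {x y : String} {N : Tm} {A₁ A₂ B : Ty} :
      Mode.ge m B.mode →
      HasTy ((x, A₁) :: (y, A₂) :: Δ) N B →
      PatTy Δ (.ppair x y N) (.tensor m A₁ A₂) B
  | pdown {Δ : Ctx} {x : String} {N : Tm} {A B : Ty} :
      Mode.ge .L B.mode →
      HasTy ((x, A) :: Δ) N B →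
      PatTy Δ (.pdown x N) (.down A) B
end

mutual
/-- The structural approximation PQ-X: same rule skeletons, shared
contexts, no splitting, no mode restrictions, implicit weakening. -/
inductive XTy : Ctx → Tm → Ty → Prop
  | var {Δ : Ctx} {x : String} {A : Ty} :
      (x, A) ∈ Δ → XTy Δ (.var x) A
  | lam {Δ : Ctx} {m : Mode} {x : String} {M : Tm} {A B : Ty} :
      XTy ((x, A) :: Δ) M B →
      XTy Δ (.lam m x M) (.arrow m A B)
  | triv {Δ : Ctx} {m : Mode} : XTy Δ (.triv m) (.unitT m)
  | pair {Δ : Ctx} {m : Mode} {M N : Tm} {A B : Ty} :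
      XTy Δ M A → XTy Δ N B → XTy Δ (.pair m M N) (.tensor m A B)
  | app {Δ : Ctx} {m : Mode} {M N : Tm} {A B : Ty} :
      XTy Δ M (.arrow m A B) → XTy Δ N A → XTy Δ (.app m M N) B
  | susp {Δ : Ctx} {lo hi : Mode} {M : Tm} {A : Ty} :
      XTy Δ M A → XTy Δ (.susp M) (.up lo hi A)
  | force {Δ : Ctx} {lo hi : Mode} {M : Tm} {A : Ty} :
      XTy Δ M (.up lo hi A) → XTy Δ (.force M) A
  | down {Δ : Ctx} {M : Tm} {A : Ty} :
      XTy Δ M A → XTy Δ (.down M) (.down A)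
  | gate {Δ : Ctx} {g : String} {S U : Ty} :
      S.Simple → U.Simple → XTy Δ (.gate g S U) (.arrow .Q S U)
  | mtch {Δ : Ctx} {M : Tm} {p : Pat} {A B : Ty} :
      XTy Δ M A → XPatTy Δ p A B → XTy Δ (.matchWith M p) B

/-- Pattern typing for PQ-X. -/
inductive XPatTy : Ctx → Pat → Ty → Ty → Prop
  | punit {Δ : Ctx} {m : Mode} {N : Tm} {B : Ty} :
      XTy Δ N B → XPatTy Δ (.punit N) (.unitT m) B
  | ppair {Δ : Ctx} {m : Mode} {x y : String} {N : Tm} {A₁ A₂ B : Ty} :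
      XTy ((x, A₁) :: (y, A₂) :: Δ) N B →
      XPatTy Δ (.ppair x y N) (.tensor m A₁ A₂) B
  | pdown {Δ : Ctx} {x : String} {N : Tm} {A B : Ty} :
      XTy ((x, A) :: Δ) N B →
      XPatTy Δ (.pdown x N) (.down A) B
end

/-- `⌊Ψ⌋`: the underlying neutral variable context of a typed one. -/
def names (Ψ : Ctx) : List String := Ψ.map Prod.fst

mutual
/-- Canonical forms under a neutral variable context. -/
inductive Can : List String → Tm → Prop
  | triv {Pi : List String} {m : Mode} : Can Pi (.triv m)
  | pair {Pi : List String} {m : Mode} {M N : Tm} :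
      Norm Pi M → Norm Pi N → Can Pi (.pair m M N)
  | lamU {Pi : List String} {x : String} {M : Tm} : Can Pi (.lam .U x M)
  | lamL {Pi : List String} {x : String} {M : Tm} : Can Pi (.lam .L x M)
  | lamQ {Pi : List String} {x : String} {M : Tm} :
      Norm (x :: Pi) M → Can Pi (.lam .Q x M)
  | susp {Pi : List String} {M : Tm} : Can Pi (.susp M)
  | down {Pi : List String} {M : Tm} : Norm Pi M → Can Pi (.down M)

/-- Neutral forms: neutral variables and (iterated) gate applications. -/
inductive Neu : List String → Tm → Prop
  | var {Pi : List String} {x : String} : x ∈ Pi → Neu Pi (.var x)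
  | gate {Pi : List String} {g : String} {S U : Ty} : Neu Pi (.gate g S U)
  | appCan {Pi : List String} {m : Mode} {g : String} {S U : Ty} {K : Tm} :
      Can Pi K → Neu Pi (.app m (.gate g S U) K)
  | appNeu {Pi : List String} {m : Mode} {g : String} {S U : Ty} {R : Tm} :
      Neu Pi R → Neu Pi (.app m (.gate g S U) R)

/-- Normal forms: canonical, neutral, or a match on a neutral
discriminee with a normal body. -/
inductive Norm : List String → Tm → Prop
  | can {Pi : List String} {K : Tm} : Can Pi K → Norm Pi K
  | neu {Pi : List String} {R : Tm} : Neu Pi R → Norm Pi R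
  | mtch {Pi : List String} {R : Tm} {p : Pat} :
      Neu Pi R → Norm (p.vars ++ Pi) p.body → Norm Pi (.matchWith R p)
end

/-- Elimination of a canonical form by a pattern. -/
inductive ECan : Tm → Pat → Tm → Prop
  | triv {m : Mode} {N : Tm} : ECan (.triv m) (.punit N) N
  | pair {m : Mode} {V W : Tm} {x y : String} {N : Tm} :
      ECan (.pair m V W) (.ppair x y N) (subst1 y W (subst1 x V N))
  | down {V : Tm} {x : String} {N : Tm} :
      ECan (.down V) (.pdown x N) (subst1 x V N)

/-- The call-by-value single-step reduction relation, parameterized by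
the context of free neutral circuit variables.  It reduces under circuit
lambda binders and under matches on neutral discriminees, and performs
commuting conversions of elimination forms past neutral matches. -/
inductive Step : List String → Tm → Tm → Prop
  | app1 {Pi : List String} {m : Mode} {M M' N : Tm} :
      Step Pi M M' → Step Pi (.app m M N) (.app m M' N)
  | app2 {Pi : List String} {m : Mode} {M N N' : Tm} :
      Norm Pi M → Step Pi N N' → Step Pi (.app m M N) (.app m M N')
  | beta {Pi : List String} {m : Mode} {x : String} {M V : Tm} :
      Norm Pi V → Step Pi (.app m (.lam m x M) V) (subst1 x V M)
  | appCC {Pi : List String} {m : Mode} {R W : Tm} {p : Pat} :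
      Neu Pi R → Norm Pi (.matchWith R p) → Norm Pi W →
      Step Pi (.app m (.matchWith R p) W)
        (.matchWith R (p.mapBody (fun b => .app m b W)))
  | lamQ {Pi : List String} {x : String} {M M' : Tm} :
      Step (x :: Pi) M M' → Step Pi (.lam .Q x M) (.lam .Q x M')
  | pair1 {Pi : List String} {m : Mode} {M M' N : Tm} :
      Step Pi M M' → Step Pi (.pair m M N) (.pair m M' N)
  | pair2 {Pi : List String} {m : Mode} {M N N' : Tm} :
      Norm Pi M → Step Pi N N' → Step Pi (.pair m M N) (.pair m M N')
  | forceSusp {Pi : List String} {M : Tm} :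
      Step Pi (.force (.susp M)) M
  | force1 {Pi : List String} {M M' : Tm} :
      Step Pi M M' → Step Pi (.force M) (.force M')
  | forceCC {Pi : List String} {R : Tm} {p : Pat} :
      Neu Pi R → Norm Pi (.matchWith R p) →
      Step Pi (.force (.matchWith R p))
        (.matchWith R (p.mapBody (fun b => .force b)))
  | down1 {Pi : List String} {M M' : Tm} :
      Step Pi M M' → Step Pi (.down M) (.down M')
  | mtch1 {Pi : List String} {M M' : Tm} {p : Pat} :
      Step Pi M M' → Step Pi (.matchWith M p) (.matchWith M' p)
  | mtchK {Pi : List String} {K P : Tm} {p : Pat} :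
      Can Pi K → ECan K p P → Step Pi (.matchWith K p) P
  | mtchR {Pi : List String} {R B' : Tm} {p : Pat} :
      Neu Pi R → Step (p.vars ++ Pi) p.body B' →
      Step Pi (.matchWith R p) (.matchWith R (p.withBody B'))
  | mtchCC {Pi : List String} {R : Tm} {p q : Pat} :
      Neu Pi R → Norm Pi (.matchWith R p) →
      Step Pi (.matchWith (.matchWith R p) q)
        (.matchWith R (p.mapBody (fun b => .matchWith b q)))

/-- Multi-step reduction. -/
def Steps (Pi : List String) : Tm → Tm → Prop :=
  Relation.ReflTransGen (Step Pi)

/-- `P` halts: it reduces to a normal form. -/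
def Halts (Pi : List String) (P : Tm) : Prop :=
  ∃ V, Steps Pi P V ∧ Norm Pi V

/-- `σ` is a neutral substitution from `Ψ` to `Φ`: it maps each neutral
variable of `Φ` to a neutral, well-typed term over `Ψ`. -/
def NSub (σ : String → Tm) (Ψ Φ : Ctx) : Prop :=
  ∀ q ∈ Φ, Neu (names Ψ) (σ q.1) ∧ XTy Ψ (σ q.1) q.2

/-- Closure of a base predicate under neutral terms, one-step expansion,
and matches on neutral discriminees (the type-generic clauses of the
Kripke logical normalization predicate). -/
inductive Close (A : Ty) (base : Ctx → Tm → Prop) : Ctx → Tm → Prop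
  | base {Ψ : Ctx} {P : Tm} : base Ψ P → Close A base Ψ P
  | neu {Ψ : Ctx} {R : Tm} :
      Neu (names Ψ) R → XTy Ψ R A → Close A base Ψ R
  | steps {Ψ : Ctx} {P P' : Tm} :
      Step (names Ψ) P P' → Close A base Ψ P' → Close A base Ψ P
  | mtch {Ψ : Ctx} {R : Tm} {p : Pat} {S : Ty} :
      Neu (names Ψ) R → XTy Ψ R S →
      Close A base (patCtx p S ++ Ψ) p.body →
      Close A base Ψ (.matchWith R p)

/-- The type-directed clauses of the logical predicate: introduction
forms at positive types, elimination forms at negative types. -/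
def LRbase : Ty → Ctx → Tm → Prop
  | .unitT m, _, P => P = .triv m
  | .qubit, _, _ => False
  | .tensor m A B, Ψ, P => ∃ M N, P = .pair m M N ∧
      Close A (LRbase A) Ψ M ∧ Close B (LRbase B) Ψ N
  | .arrow m A B, Ψ, P => Halts (names Ψ) P ∧
      ∀ (Φ : Ctx) (σ : String → Tm), NSub σ Φ Ψ →
        ∀ Q, Close A (LRbase A) Φ Q →
          Close B (LRbase B) Φ (.app m (P.subst σ) Q)
  | .up _ _ A, Ψ, P => Close A (LRbase A) Ψ (.force P)
  | .down A, Ψ, P => ∃ V, P = .down V ∧ Close A (LRbase A) Ψ V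

/-- The Kripke logical normalization predicate `Ψ ⊩ P ∈ ⟦A⟧`. -/
def LR (Ψ : Ctx) (P : Tm) (A : Ty) : Prop := Close A (LRbase A) Ψ P

/-- Reducible substitutions: each variable is mapped to a functionally
closed normal form satisfying the logical predicate at its type. -/
def RSub (Ψ : Ctx) (σ : String → Tm) (Δ : Ctx) : Prop :=
  ∀ q ∈ Δ, Norm (names Ψ) (σ q.1) ∧ LR Ψ (σ q.1) q.2


/-- if `force M` halts then `M` halts. -/
theorem halts_of_halts_force {Pi : List String} {M : Tm}
    (h : Halts Pi (.force M)) : Halts Pi M := by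
  obtain ⟨V, hs, hn⟩ := h
  suffices H : ∀ P V, Steps Pi P V → Norm Pi V →
      ∀ M, P = .force M → Halts Pi M from H _ _ hs hn M rfl
  intro P V hs
  induction hs using Relation.ReflTransGen.head_induction_on with
  | refl =>
    intro hn M hM
    subst hM
    exfalso
    cases hn with
    | can h => cases h
    | neu h => cases h
  | head hst _ ih =>
    intro hn M hM
    subst hM
    cases hst with
    | forceSusp => exact ⟨_, Relation.ReflTransGen.refl, Norm.can Can.susp⟩
    | force1 h =>
      obtain ⟨W, hw, hwn⟩ := ih hn _ rfl
      exact ⟨W, Relation.ReflTransGen.head h hw, hwn⟩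
    | forceCC hR hnm => exact ⟨_, Relation.ReflTransGen.refl, hnm⟩

end PQA
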